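/- (Foster–Lyapunov drift condition for the toggle switch.) Let Q be the rate matrix of the toggle switch network with parameters k₁,k₂,k₃,k₄,θ > 0. For every integer d ≥ 1 and w(x) := (x₁+x₂)^d, there exist constants K₁ ∈ ℝ and K₂ > 0 such that Qw(x) := ∑_{y∈ℕ²} q(x,y) w(y) = (a₁(x)+a₃(x))((x₁+x₂+1)^d − (x₁+x₂)^d) + (a₂(x)+a₄(x))((x₁+x₂−1)^d − (x₁+x₂)^d) ≤ K₁ − K₂(x₁+x₂)^d for all x = (x₁,x₂) ∈ ℕ². -/

import Mathlib

/-!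
Every reaction moves the total copy number `s = x₁ + x₂` by `±1`. The birth propensities
`a₁, a₃` are bounded by `k₁ + k₃`, so births raise `s ^ d` by at most
`(k₁ + k₃) ((s + 1) ^ d - s ^ d) = o(s ^ d)`. The death propensities satisfy
`a₂ + a₄ ≥ min k₂ k₄ · s`, and `(s - 1) ^ d - s ^ d ≤ -s ^ (d - 1)`, so deaths lower `s ^ d`
by at least `min k₂ k₄ · s ^ d`. Half of that absorbs the birth term for large `s`, and the
finitely many small `s` go into `K₁`.
-/

open Filter Topology

theorem sub_one_pow_succ_sub_pow_succ_le {a : ℝ} (ha : 1 ≤ a) (m : ℕ) :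
    (a - 1) ^ (m + 1) - a ^ (m + 1) ≤ -a ^ m := by
  have hpow : (a - 1) ^ m ≤ a ^ m := pow_le_pow_left₀ (by linarith) (by linarith) m
  calc (a - 1) ^ (m + 1) - a ^ (m + 1) = (a - 1) ^ m * (a - 1) - a ^ m * a := by ring
    _ ≤ a ^ m * (a - 1) - a ^ m * a := by gcongr
    _ = -a ^ m := by ring

theorem min_mul_add_le_mul_add_mul {a b x y : ℝ} (hx : 0 ≤ x) (hy : 0 ≤ y) :
    min a b * (x + y) ≤ a * x + b * y := by
  nlinarith [min_le_left a b, min_le_right a b]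

theorem eventually_mul_add_one_pow_sub_pow_le (A : ℝ) {ε : ℝ} (hε : 0 < ε) (d : ℕ) :
    ∀ᶠ n : ℕ in atTop, A * (((n : ℝ) + 1) ^ d - (n : ℝ) ^ d) ≤ ε * (n : ℝ) ^ d := by
  have hlim : Tendsto (fun n : ℕ => A * ((1 + (n : ℝ)⁻¹) ^ d - 1)) atTop
      (𝓝 (A * ((1 + 0) ^ d - 1))) :=
    tendsto_const_nhds.mul
      (((tendsto_const_nhds.add tendsto_inv_atTop_nhds_zero_nat).pow d).sub tendsto_const_nhds)
  simp only [add_zero, one_pow, sub_self, mul_zero] at hlim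
  filter_upwards [hlim.eventually (gt_mem_nhds hε), eventually_ne_atTop 0] with n hsmall hn
  have hn' : (n : ℝ) ≠ 0 := Nat.cast_ne_zero.mpr hn
  calc A * (((n : ℝ) + 1) ^ d - (n : ℝ) ^ d)
        = A * ((1 + (n : ℝ)⁻¹) ^ d - 1) * (n : ℝ) ^ d := by
        rw [mul_assoc, sub_mul, one_mul, ← mul_pow, add_mul, one_mul, inv_mul_cancel₀ hn']
    _ ≤ ε * (n : ℝ) ^ d := by gcongr

theorem exists_forall_mul_add_one_pow_sub_pow_le (A : ℝ) {ε : ℝ} (hε : 0 < ε) (d : ℕ) :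
    ∃ K, ∀ n : ℕ, A * (((n : ℝ) + 1) ^ d - (n : ℝ) ^ d) ≤ K + ε * (n : ℝ) ^ d := by
  have hbdd : IsBoundedUnder (· ≤ ·) atTop
      fun n : ℕ => A * (((n : ℝ) + 1) ^ d - (n : ℝ) ^ d) - ε * (n : ℝ) ^ d :=
    isBoundedUnder_of_eventually_le (a := 0) <|
      (eventually_mul_add_one_pow_sub_pow_le A hε d).mono fun n hn => sub_nonpos.mpr hn
  obtain ⟨K, hK⟩ := hbdd.bddAbove_range
  exact ⟨K, fun n => sub_le_iff_le_add.mp (hK ⟨n, rfl⟩)⟩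

section ToggleSwitch

variable {k₁ k₂ k₃ k₄ θ : ℝ}

theorem toggle_birth_rate_le (hk₁ : 0 ≤ k₁) (hk₃ : 0 ≤ k₃) (hθ : 0 ≤ θ) (x₁ x₂ : ℕ) :
    k₁ / (1 + ((x₂ : ℝ) / θ) ^ 3) + k₃ / (1 + (x₁ : ℝ)) ≤ k₁ + k₃ := by
  gcongr
  · exact div_le_self hk₁ (le_add_of_nonneg_right (by positivity))
  · exact div_le_self hk₃ (le_add_of_nonneg_right (by positivity))

theorem toggle_death_drift_le (hk₂ : 0 ≤ k₂) (hk₄ : 0 ≤ k₄) (x₁ x₂ m : ℕ) :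
    (k₂ * (x₁ : ℝ) + k₄ * (x₂ : ℝ)) *
        (((x₁ : ℝ) + (x₂ : ℝ) - 1) ^ (m + 1) - ((x₁ : ℝ) + (x₂ : ℝ)) ^ (m + 1))
      ≤ -(min k₂ k₄ * ((x₁ : ℝ) + (x₂ : ℝ)) ^ (m + 1)) := by
  rcases Nat.eq_zero_or_pos (x₁ + x₂) with hzero | hpos
  · obtain ⟨rfl, rfl⟩ : x₁ = 0 ∧ x₂ = 0 := by omega
    simp
  set s : ℝ := (x₁ : ℝ) + (x₂ : ℝ)
  have hs : 1 ≤ s := by unfold s; exact_mod_cast hpos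
  have hstep := sub_one_pow_succ_sub_pow_succ_le hs m
  have hsm : 0 ≤ s ^ m := by positivity
  calc (k₂ * (x₁ : ℝ) + k₄ * (x₂ : ℝ)) * ((s - 1) ^ (m + 1) - s ^ (m + 1))
      ≤ (min k₂ k₄ * s) * ((s - 1) ^ (m + 1) - s ^ (m + 1)) :=
        mul_le_mul_of_nonpos_right (min_mul_add_le_mul_add_mul (by positivity) (by positivity))
          (by linarith)
    _ ≤ (min k₂ k₄ * s) * (-s ^ m) :=
        mul_le_mul_of_nonneg_left hstep (mul_nonneg (le_min hk₂ hk₄) (by linarith))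
    _ = -(min k₂ k₄ * s ^ (m + 1)) := by ring

end ToggleSwitch

/-- **Statement 17** (Foster–Lyapunov drift condition for the toggle switch).
For the rate matrix of the toggle switch with parameters `k₁, k₂, k₃, k₄, θ > 0`,
every integer `d ≥ 1` and `w(x) = (x₁ + x₂)^d`, there are constants `K₁ ∈ ℝ` and
`K₂ > 0` such that `Qw(x) = (a₁(x) + a₃(x))((x₁+x₂+1)^d - (x₁+x₂)^d)
+ (a₂(x) + a₄(x))((x₁+x₂-1)^d - (x₁+x₂)^d) ≤ K₁ - K₂ (x₁+x₂)^d` for all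
`x = (x₁, x₂) ∈ ℕ²`, where `a₁(x) = k₁/(1 + (x₂/θ)³)`, `a₂(x) = k₂ x₁`,
`a₃(x) = k₃/(1 + x₁)`, `a₄(x) = k₄ x₂`. -/
theorem toggle_switch_foster_lyapunov
    (k₁ k₂ k₃ k₄ θ : ℝ) (hk₁ : 0 < k₁) (hk₂ : 0 < k₂) (hk₃ : 0 < k₃) (hk₄ : 0 < k₄)
    (hθ : 0 < θ) (d : ℕ) (hd : 1 ≤ d) :
    ∃ (K₁ K₂ : ℝ), 0 < K₂ ∧ ∀ x₁ x₂ : ℕ,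
      (k₁ / (1 + ((x₂ : ℝ) / θ) ^ 3) + k₃ / (1 + (x₁ : ℝ))) *
          (((x₁ : ℝ) + (x₂ : ℝ) + 1) ^ d - ((x₁ : ℝ) + (x₂ : ℝ)) ^ d)
        + (k₂ * (x₁ : ℝ) + k₄ * (x₂ : ℝ)) *
            (((x₁ : ℝ) + (x₂ : ℝ) - 1) ^ d - ((x₁ : ℝ) + (x₂ : ℝ)) ^ d)
      ≤ K₁ - K₂ * ((x₁ : ℝ) + (x₂ : ℝ)) ^ d := by
  obtain ⟨m, rfl⟩ := Nat.exists_eq_add_of_le' hd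
  have hc : 0 < min k₂ k₄ / 2 := half_pos (lt_min hk₂ hk₄)
  obtain ⟨K, hK⟩ := exists_forall_mul_add_one_pow_sub_pow_le (k₁ + k₃) hc (m + 1)
  refine ⟨K, min k₂ k₄ / 2, hc, fun x₁ x₂ => ?_⟩
  have hbirth := mul_le_mul_of_nonneg_right (toggle_birth_rate_le hk₁.le hk₃.le hθ.le x₁ x₂)
    (sub_nonneg.mpr (pow_le_pow_left₀ (a := (x₁ : ℝ) + x₂) (by positivity)
      (le_add_of_nonneg_right zero_le_one) (m + 1)))
  have hdeath := toggle_death_drift_le hk₂.le hk₄.le x₁ x₂ m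
  have hlarge := hK (x₁ + x₂)
  push_cast at hlarge
  linarith
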